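/- arXiv:2306.15520 — 3 statements merged into one kernel-verified Lean document; each statement's English description precedes it below -/
import Mathlib

section
/- For any reduced word w in the free group F_n (n ≥ 2), the left extension relation l_w = p_w - Σ_{s ∈ S̄ \ {w_1^{-1}}} p_{sw} is a bounded function on F_n, taking only the values 0 and 1 on nonempty reduced words. -/
/-!
In a reduced word `v`, every occurrence of `w` other than one at the very start is preceded by
exactly one letter `s`, and `s :: w`, being a subword of `v`, is then reduced. Hence
`p_w(v) = [w is a prefix of v] + Σ_{s :: w reduced} p_{s :: w}(v)`, i.e. `l_w(v)` is `1` or `0`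
according as `w` is a prefix of `v` or not. For `w = ε` the convention `p_ε(v) = |v|` is exactly
what makes `l_ε` vanish, since every letter of `v` is one occurrence of a one-letter word.
-/

open List Finset

/-- Number of occurrences of `w` as a contiguous subword of `v`. -/
def occ {α : Type*} [DecidableEq α] (w v : List α) : ℕ :=
  ((List.range (v.length + 1 - w.length)).filter (fun i => decide (w <+: v.drop i))).length

/-- Elementary counting function, with the convention `p_ε(v) = |v|`. -/
def cnt {α : Type*} [DecidableEq α] (w v : List α) : ℚ :=
  if w = [] then v.length else occ w v

/-- The inverse of a letter of `S̄`: letters are pairs (generator, sign). -/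
def invL {n : ℕ} (a : Fin n × Bool) : Fin n × Bool := (a.1, !a.2)

/-- The inverse of a (reduced) word. -/
def invW {n : ℕ} (w : List (Fin n × Bool)) : List (Fin n × Bool) := (w.map invL).reverse

def redB {n : ℕ} : List (Fin n × Bool) → Bool
  | a :: b :: t => decide (b ≠ invL a) && redB (b :: t)
  | _ => true

/-- A word over `S̄` is reduced if no letter is followed by its inverse. -/
def Red {n : ℕ} (w : List (Fin n × Bool)) : Prop := redB w = true

instance {n : ℕ} : DecidablePred (Red (n := n)) := fun _ => instDecidableEqBool _ _

/-- Left extension relation `l_w = p_w - Σ_{s : sw reduced} p_{sw}`. -/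
def lgrp {n : ℕ} (w v : List (Fin n × Bool)) : ℚ :=
  cnt w v - ∑ s ∈ Finset.univ.filter (fun s => Red (s :: w)), cnt (s :: w) v

/-- Right extension relation `r_w = p_w - Σ_{s : ws reduced} p_{ws}`. -/
def rgrp {n : ℕ} (w v : List (Fin n × Bool)) : ℚ :=
  cnt w v - ∑ s ∈ Finset.univ.filter (fun s => Red (w ++ [s])), cnt (w ++ [s]) v

/-- The map `σ₁` sending a function on F_n to `f - f ∘ (·⁻¹)`; on counting functions
it sends `p_w` to the Brooks quasimorphism `φ_w = p_w - p_{w⁻¹}`. -/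
def sig1 {n : ℕ} (f : List (Fin n × Bool) → ℚ) : List (Fin n × Bool) → ℚ :=
  fun v => f v - f (invW v)

section Occurrences

variable {α : Type*} [DecidableEq α]

lemma occ_nil {w : List α} (hw : w ≠ []) : occ w [] = 0 := by
  have : 1 - w.length = 0 := by have := List.length_pos_iff.mpr hw; omega
  simp [occ, this]

lemma occ_cons {w : List α} (hw : w ≠ []) (a : α) (v : List α) :
    occ w (a :: v) = (if w <+: a :: v then 1 else 0) + occ w v := by
  have hw₁ := List.length_pos_iff.mpr hw
  unfold occ
  by_cases hlen : w.length ≤ v.length + 1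
  · have hrange : (a :: v).length + 1 - w.length = (v.length + 1 - w.length) + 1 := by
      simp only [List.length_cons]; omega
    rw [hrange, List.range_succ_eq_map, List.filter_cons, List.filter_map, List.drop_zero]
    by_cases hp : w <+: a :: v <;> simp [hp, Function.comp_def, add_comm]
  · have hp : ¬ w <+: a :: v := fun h => by have := h.length_le; simp at this; omega
    have h₁ : (a :: v).length + 1 - w.length = 0 := by simp only [List.length_cons]; omega
    have h₂ : v.length + 1 - w.length = 0 := by omega
    rw [h₁, h₂]
    simp [hp]

lemma infix_of_occ_ne_zero {w v : List α} (h : occ w v ≠ 0) : w <:+: v := by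
  obtain ⟨i, hi⟩ := List.exists_mem_of_length_pos (Nat.pos_of_ne_zero h)
  exact (of_decide_eq_true (List.mem_filter.mp hi).2).isInfix.trans (List.drop_suffix i v).isInfix

lemma occ_eq_sum_occ_cons [Fintype α] {w : List α} (hw : w ≠ []) (v : List α) :
    occ w v = (if w <+: v then 1 else 0) + ∑ s, occ (s :: w) v := by
  induction v with
  | nil => simp [occ_nil hw, occ_nil (List.cons_ne_nil _ w), List.prefix_nil, hw]
  | cons a v ih =>
    have hhead : ∑ s, (if s :: w <+: a :: v then 1 else 0) = if w <+: v then 1 else 0 := by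
      simp only [List.cons_prefix_cons, ite_and, Finset.sum_ite_eq', Finset.mem_univ, if_true]
    simp only [occ_cons hw, occ_cons (List.cons_ne_nil _ w), Finset.sum_add_distrib, hhead, ih]

lemma sum_occ_singleton [Fintype α] (v : List α) : ∑ s, occ [s] v = v.length := by
  induction v with
  | nil => simp [occ_nil]
  | cons a v ih =>
    simp only [occ_cons (List.cons_ne_nil _ []), Finset.sum_add_distrib, ih, List.cons_prefix_cons,
      List.nil_prefix, and_true]
    simp [add_comm]

end Occurrences

section FreeGroup

variable {n : ℕ}

lemma red_iff_isChain : ∀ {w : List (Fin n × Bool)}, Red w ↔ w.IsChain (fun a b => b ≠ invL a)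
  | [] | [_] => by simp [Red, redB]
  | a :: b :: t => by simp [Red, redB, ← red_iff_isChain (w := b :: t)]

lemma Red.infix {u v : List (Fin n × Bool)} (hv : Red v) (h : u <:+: v) : Red u :=
  red_iff_isChain.mpr ((red_iff_isChain.mp hv).infix h)

lemma occ_eq_zero_of_not_red {u v : List (Fin n × Bool)} (hv : Red v) (hu : ¬ Red u) :
    occ u v = 0 := by
  by_contra h
  exact hu (hv.infix (infix_of_occ_ne_zero h))

lemma lgrp_nil (v : List (Fin n × Bool)) : lgrp [] v = 0 := by
  have hred : ∀ s : Fin n × Bool, Red [s] := fun _ => rfl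
  simp [lgrp, cnt, hred, ← sum_occ_singleton v]

lemma lgrp_of_ne_nil {w v : List (Fin n × Bool)} (hw : w ≠ []) (hv : Red v) :
    lgrp w v = if w <+: v then 1 else 0 := by
  have hfilter : ∑ s ∈ Finset.univ.filter (fun s => Red (s :: w)), cnt (s :: w) v
      = ∑ s, (occ (s :: w) v : ℚ) := by
    rw [Finset.sum_filter_of_ne]
    · simp [cnt]
    · intro s _ hs
      by_contra hred
      exact hs (by simp [cnt, occ_eq_zero_of_not_red hv hred])
  rw [lgrp, hfilter, cnt, if_neg hw, occ_eq_sum_occ_cons hw]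
  push_cast
  ring

end FreeGroup

theorem stmt_3_general (n : ℕ) (w : List (Fin n × Bool)) :
    (∀ v : List (Fin n × Bool), Red v → v ≠ [] → lgrp w v = 0 ∨ lgrp w v = 1) ∧
    (∃ C : ℚ, ∀ v : List (Fin n × Bool), Red v → |lgrp w v| ≤ C) := by
  have hvalues : ∀ v, Red v → lgrp w v = 0 ∨ lgrp w v = 1 := by
    intro v hv
    rcases eq_or_ne w [] with rfl | hw
    · exact Or.inl (lgrp_nil v)
    · rw [lgrp_of_ne_nil hw hv]
      split_ifs <;> simp
  refine ⟨fun v hv _ => hvalues v hv, 1, fun v hv => ?_⟩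
  rcases hvalues v hv with h | h <;> simp [h]

/-- For any reduced word w in F_n, the left extension relation
l_w = p_w - Σ_{s : sw reduced} p_{sw} takes only the values 0 and 1 on nonempty
reduced words; in particular it is a bounded function on F_n. -/
theorem stmt_3 (n : ℕ) (hn : 2 ≤ n) (w : List (Fin n × Bool)) (hw : Red w) :
    (∀ v : List (Fin n × Bool), Red v → v ≠ [] → lgrp w v = 0 ∨ lgrp w v = 1) ∧
    (∃ C : ℚ, ∀ v : List (Fin n × Bool), Red v → |lgrp w v| ≤ C) :=
  stmt_3_general n w
end

section
/- Let f = Σ_i x_i p_{w_i} be a counting function on M_n with all w_i nonempty, not starting or ending with a_1, all x_i ≠ 0, and let w be a shortest word among the w_i and L the maximal length of the w_i. Then for v = w a_1^L and every k ≥ 1, f(v^k) = k·x_w; hence f is unbounded. -/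
/-!
Let v = w a_1^L, of period P = |w| + L. If u from the support occurs in v^k at position i, the
offset i mod P lies inside the block w because u does not start with a_1; since |u| ≤ L the
occurrence then stays within w a_1^L, and since u does not end with a_1 it ends inside w.
So i mod P + |u| ≤ |w| ≤ |u|, which forces i mod P = 0 and u = w. Only p_w contributes, with
exactly k occurrences, so f(v^k) = k x_w is unbounded.
-/

open List Finset

namespace List

variable {α : Type*}

theorem IsPrefix.of_append_replicate {u s : List α} {a : α} {m : ℕ}
    (h : u <+: s ++ replicate m a) (hu : u.getLast? ≠ some a) : u <+: s := by
  induction m with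
  | zero => simpa using h
  | succ m ih =>
    rw [replicate_succ', ← append_assoc, prefix_concat_iff] at h
    rcases h with rfl | h
    · simp at hu
    · exact ih h

theorem head?_eq_of_prefix_replicate_append {u t : List α} {a : α} {m : ℕ} (hm : m ≠ 0)
    (hu : u ≠ []) (h : u <+: replicate m a ++ t) : u.head? = some a := by
  obtain ⟨m, rfl⟩ := Nat.exists_eq_succ_of_ne_zero hm
  cases u with
  | nil => exact absurd rfl hu
  | cons b u => simp_all [replicate_succ]

theorem flatten_replicate_prefix_succ (v : List α) (k : ℕ) :
    flatten (replicate k v) <+: flatten (replicate (k + 1) v) := by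
  rw [replicate_succ', flatten_append]
  exact prefix_append _ _

theorem drop_flatten_replicate_prefix (v : List α) (k i : ℕ) :
    (flatten (replicate k v)).drop i <+: v.drop (i % v.length) ++ flatten (replicate k v) := by
  induction k generalizing i with
  | zero => simp
  | succ k ih =>
    have hmono := (prefix_append_right_inj (v.drop (i % v.length))).mpr
      (flatten_replicate_prefix_succ v k)
    conv_lhs => rw [replicate_succ, flatten_cons]
    rcases Nat.lt_or_ge i v.length with hi | hi
    · rw [Nat.mod_eq_of_lt hi] at hmono ⊢
      rwa [drop_append_of_le_length hi.le]
    · obtain ⟨j, rfl⟩ := Nat.exists_eq_add_of_le hi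
      rw [Nat.add_mod_left] at hmono ⊢
      rw [drop_length_add_append]
      exact (ih j).trans hmono

theorem prefix_drop_mul_flatten_replicate (v : List α) {q k : ℕ} (h : q < k) :
    v <+: (flatten (replicate k v)).drop (q * v.length) := by
  obtain ⟨j, rfl⟩ := Nat.exists_eq_add_of_lt h
  rw [add_assoc, replicate_add, flatten_append, drop_left' (by simp),
    replicate_succ, flatten_cons]
  exact prefix_append _ _

theorem eq_of_prefix_drop_append_replicate_append {w u t : List α} {a : α} {L r : ℕ}
    (hr : r < w.length + L) (h : u <+: (w ++ replicate L a).drop r ++ t) (hu : u ≠ [])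
    (hhead : u.head? ≠ some a) (hlast : u.getLast? ≠ some a)
    (hwu : w.length ≤ u.length) (huL : u.length ≤ L) : r = 0 ∧ u = w := by
  have hrw : r < w.length := by
    by_contra! hwr
    rw [drop_append, drop_eq_nil_of_le hwr, nil_append, drop_replicate] at h
    exact hhead (head?_eq_of_prefix_replicate_append (by omega) hu h)
  rw [drop_append_of_le_length hrw.le] at h
  have hblock : u <+: w.drop r ++ replicate L a := by
    refine prefix_of_prefix_length_le h (prefix_append _ _) ?_
    simp only [length_append, length_drop, length_replicate]
    omega
  have hw : u <+: w.drop r := hblock.of_append_replicate hlast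
  have hlen := hw.length_le
  rw [length_drop] at hlen
  obtain rfl : r = 0 := by omega
  rw [drop_zero] at hw
  exact ⟨rfl, hw.eq_of_length (by omega)⟩

theorem eq_of_prefix_drop_flatten_replicate {w u : List α} {a : α} {L k i : ℕ}
    (h : u <+: (flatten (replicate k (w ++ replicate L a))).drop i) (hu : u ≠ [])
    (hhead : u.head? ≠ some a) (hlast : u.getLast? ≠ some a)
    (hwu : w.length ≤ u.length) (huL : u.length ≤ L) : (w.length + L) ∣ i ∧ u = w := by
  have hP : 0 < (w ++ replicate L a).length := by
    have := length_pos_iff.mpr hu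
    simp only [length_append, length_replicate]
    omega
  obtain ⟨hr, rfl⟩ := eq_of_prefix_drop_append_replicate_append (by simpa using Nat.mod_lt i hP)
    (h.trans (drop_flatten_replicate_prefix _ k i)) hu hhead hlast hwu huL
  simpa using Nat.dvd_of_mod_eq_zero hr

end List

theorem card_filter_dvd_range_mul_add_one_sub {P m : ℕ} (k : ℕ) (hm : 0 < m) (hmP : m ≤ P) :
    #{i ∈ Finset.range (k * P + 1 - m) | P ∣ i} = k := by
  have hmul : {i ∈ Finset.range (k * P + 1 - m) | P ∣ i} =
      (Finset.range k).map ⟨(· * P), mul_left_injective₀ (by omega)⟩ := by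
    ext i
    simp only [Finset.mem_filter, Finset.mem_range, Finset.mem_map, Function.Embedding.coeFn_mk]
    constructor
    · rintro ⟨hi, q, rfl⟩
      refine ⟨q, Nat.lt_of_mul_lt_mul_left (a := P) ?_, mul_comm _ _⟩
      rw [mul_comm P k]
      omega
    · rintro ⟨q, hq, rfl⟩
      have := Nat.mul_le_mul_right P hq
      rw [Nat.succ_mul] at this
      exact ⟨by omega, dvd_mul_left P q⟩
  rw [hmul, card_map, Finset.card_range]

theorem occ_eq_card_filter {α : Type*} [DecidableEq α] (u v : List α) :
    occ u v = #{i ∈ Finset.range (v.length + 1 - u.length) | u <+: v.drop i} := rfl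

theorem occ_flatten_replicate_append_replicate {α : Type*} [DecidableEq α] {w u : List α}
    {a : α} {L : ℕ} (k : ℕ) (hu : u ≠ []) (hhead : u.head? ≠ some a)
    (hlast : u.getLast? ≠ some a) (hwu : w.length ≤ u.length) (huL : u.length ≤ L) :
    occ u (flatten (replicate k (w ++ replicate L a))) = if u = w then k else 0 := by
  have hocc {i : ℕ} (h : u <+: (flatten (replicate k (w ++ replicate L a))).drop i) :=
    eq_of_prefix_drop_flatten_replicate h hu hhead hlast hwu huL
  rw [occ_eq_card_filter]
  split_ifs with huw
  · subst huw
    have hu0 := length_pos_iff.mpr hu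
    rw [Finset.filter_congr (q := fun i => (u.length + L) ∣ i) ?_]
    · simpa using card_filter_dvd_range_mul_add_one_sub k hu0 (Nat.le_add_right u.length L)
    · intro i hi
      refine ⟨fun h => (hocc h).1, ?_⟩
      rintro ⟨q, rfl⟩
      simp only [Finset.mem_range, length_flatten, map_replicate, sum_replicate, smul_eq_mul,
        length_append, length_replicate] at hi
      have hq : q < k :=
        Nat.lt_of_mul_lt_mul_left (a := u.length + L) (by rw [mul_comm _ k]; omega)
      simpa [mul_comm] using
        (prefix_append u (replicate L a)).trans (prefix_drop_mul_flatten_replicate _ hq)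
  · rw [Finset.card_eq_zero, Finset.filter_eq_empty_iff]
    exact fun i _ h => huw (hocc h).2

/-- For f = Σ x_i p_{w_i} with all w_i nonempty, not starting or ending with a_1,
w a shortest word of the support and L the maximal length, one has
f((w a_1^L)^k) = k x_w for all k ≥ 1; hence f is unbounded. -/
theorem stmt_12 (n : ℕ) (hn : 2 ≤ n) (x : List (Fin n) →₀ ℚ) (w : List (Fin n)) (L : ℕ)
    (hsupp : ∀ u ∈ x.support, u ≠ [] ∧ u.head? ≠ some (⟨0, by omega⟩ : Fin n) ∧
      u.getLast? ≠ some (⟨0, by omega⟩ : Fin n))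
    (hw : w ∈ x.support)
    (hshort : ∀ u ∈ x.support, w.length ≤ u.length)
    (hLmax : ∀ u ∈ x.support, u.length ≤ L) :
    (∀ k : ℕ, 1 ≤ k →
      ∑ u ∈ x.support, x u *
        (occ u (List.flatten (List.replicate k (w ++ List.replicate L (⟨0, by omega⟩ : Fin n)))) : ℚ)
        = k * x w) ∧
    ¬ ∃ C : ℚ, ∀ v : List (Fin n), |∑ u ∈ x.support, x u * (occ u v : ℚ)| ≤ C := by
  have hpow (k : ℕ) : ∑ u ∈ x.support, x u *
      (occ u (flatten (replicate k (w ++ replicate L (⟨0, by omega⟩ : Fin n)))) : ℚ) =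
        k * x w := by
    have hocc {u} (hu : u ∈ x.support) := occ_flatten_replicate_append_replicate k
      (hsupp u hu).1 (hsupp u hu).2.1 (hsupp u hu).2.2 (hshort u hu) (hLmax u hu)
    rw [Finset.sum_eq_single_of_mem w hw fun u hu huw => by simp [hocc hu, huw], hocc hw,
      if_pos rfl, mul_comm]
  refine ⟨fun k _ => hpow k, ?_⟩
  rintro ⟨C, hC⟩
  have hxw : 0 < |x w| := abs_pos.mpr (Finsupp.mem_support_iff.mp hw)
  obtain ⟨k, hk⟩ := exists_nat_gt (C / |x w|)
  have hbound := hC (flatten (replicate k (w ++ replicate L (⟨0, by omega⟩ : Fin n))))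
  rw [hpow, abs_mul, Nat.abs_cast] at hbound
  linarith [(div_lt_iff₀ hxw).mp hk]
end

section
/- The kernel K_Br(F_n) of the composed map σ: C(F_n) → B̂r(F_n) (sending p_w to the class of φ_w = p_w - p_{w^{-1}} modulo bounded functions) is spanned by the symmetry relations s_w = p_w + p_{w^{-1}} and the symmetrized extension relations se_w = l_w - r_{w^{-1}}, over all reduced words w. -/
open List Finset

/-- The Brooks quasimorphism `φ_w = p_w - p_{w⁻¹}` of a nonempty reduced word. -/
def brooks {n : ℕ} (w v : List (Fin n × Bool)) : ℚ := (occ w v : ℚ) - (occ (invW w) v : ℚ)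

/-- The set W̄' of reduced words (including ε) with `w₁ ≠ a₁`, `w₁w₂ ≠ a₂a₁⁻¹`,
`w_fin ≠ a₁⁻¹`, `w_{fin-1}w_fin ≠ a₁a₂⁻¹`. -/
def WbarAux (n : ℕ) (hn : 2 ≤ n) : Set (List (Fin n × Bool)) :=
  {w | Red w ∧ w.head? ≠ some ((⟨0, by omega⟩ : Fin n), true) ∧
    w.take 2 ≠ [((⟨1, hn⟩ : Fin n), true), ((⟨0, by omega⟩ : Fin n), false)] ∧
    w.getLast? ≠ some ((⟨0, by omega⟩ : Fin n), false) ∧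
    w.reverse.take 2 ≠ [((⟨1, hn⟩ : Fin n), false), ((⟨0, by omega⟩ : Fin n), true)]}

/-- The set W̄ = (W̄' ∪ {a₁⁻¹}) \ {a₂}. -/
def Wbar (n : ℕ) (hn : 2 ≤ n) : Set (List (Fin n × Bool)) :=
  (WbarAux n hn ∪ {[((⟨0, by omega⟩ : Fin n), false)]}) \ {[((⟨1, hn⟩ : Fin n), true)]}

/-!
A combination `f` of counting functions is killed by `σ` iff `σ₁ f = f - f ∘ inv` is bounded.
Since `f = ½ (f + f ∘ inv) + ½ σ₁ f` and `f + f ∘ inv` is a combination of symmetry relations,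
it suffices to show that a bounded combination `g` of counting functions is a combination of
relations.

The left extension relations `l_w` are bounded (on a reduced word `v`, `l_w(v)` is `1` if `w` is
a nonempty prefix of `v` and `0` otherwise), so `p_w = l_w + Σ_s p_{sw}` reduces `g` to a bounded
combination `Σ_{|w| = m+1} D(w) p_w`, whose value on `v` is the sum of `D` over the windows of
length `m + 1` of `v`. Evaluating on the powers of cyclically reduced words shows that the sum of
`D` around every closed walk of the de Bruijn-type graph on reduced words of length `m` vanishes,
so `D(w) = φ(tail w) - φ(init w)` for a potential `φ`, and then
`Σ D(w) p_w = Σ_u φ(u) (r_u - l_u)`. Finally, `2 l_w = s_w - Σ_s s_{sw} + se_w` and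
`r_w = l_{w⁻¹} - se_{w⁻¹}` express `l_w` and `r_w` through the relations.
-/

namespace BrooksKernel

variable {n : ℕ}

abbrev Word (n : ℕ) := List (Fin n × Bool)

@[simp] lemma invL_invL (a : Fin n × Bool) : invL (invL a) = a := by
  simp [invL]

lemma red_iff_isChain {w : Word n} : Red w ↔ IsChain (fun a b => b ≠ invL a) w := by
  induction w with
  | nil => simp [Red, redB]
  | cons a t ih =>
    cases t with
    | nil => simp [Red, redB]
    | cons b t =>
      rw [List.isChain_cons_cons, ← ih]
      simp [Red, redB]

lemma red_of_infix {v w : Word n} (h : Red v) (hw : w <:+: v) : Red w :=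
  red_iff_isChain.2 ((red_iff_isChain.1 h).infix hw)

lemma red_append_iff {x y : Word n} :
    Red (x ++ y) ↔ Red x ∧ Red y ∧ ∀ a ∈ x.getLast?, ∀ b ∈ y.head?, b ≠ invL a := by
  simp only [red_iff_isChain, List.isChain_append]

lemma red_append_overlap {x y z : Word n} (h₁ : Red (x ++ y)) (h₂ : Red (y ++ z))
    (hy : y ≠ []) : Red (x ++ y ++ z) := by
  rw [red_iff_isChain] at *
  exact h₁.append_overlap h₂ hy

@[simp] lemma length_invW (w : Word n) : (invW w).length = w.length := by
  simp [invW]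

@[simp] lemma invW_invW (w : Word n) : invW (invW w) = w := by
  simp [invW, List.map_reverse, Function.comp_def]

lemma invW_cons (s : Fin n × Bool) (w : Word n) : invW (s :: w) = invW w ++ [invL s] := by
  simp [invW]

lemma red_invW_iff {w : Word n} : Red (invW w) ↔ Red w := by
  have key : ∀ w : Word n, Red w → Red (invW w) := by
    intro w hw
    rw [red_iff_isChain, invW, List.isChain_reverse, List.isChain_map]
    exact (red_iff_isChain.1 hw).imp fun a b hab => by simpa [flip] using hab.symm
  exact ⟨fun h => by simpa using key _ h, key w⟩

lemma red_invW {w : Word n} (h : Red w) : Red (invW w) := red_invW_iff.2 h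

lemma red_cons_iff_red_invW_append {s : Fin n × Bool} {w : Word n} :
    Red (s :: w) ↔ Red (invW w ++ [invL s]) := by
  rw [← invW_cons, red_invW_iff]

lemma occ_eq_sum {α : Type*} [DecidableEq α] (w v : List α) :
    occ w v = ∑ i ∈ range (v.length + 1 - w.length),
      if (v.drop i).take w.length = w then 1 else 0 := by
  have hcard : occ w v = #{i ∈ range (v.length + 1 - w.length) | w <+: v.drop i} := rfl
  simp only [hcard, card_filter, List.prefix_iff_eq_take, eq_comm]

lemma invW_eq_iff {x y : Word n} : invW x = y ↔ x = invW y :=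
  ⟨fun h => by rw [← h, invW_invW], fun h => by rw [h, invW_invW]⟩

lemma take_drop_invW (v : Word n) {i k : ℕ} (h : i + k ≤ v.length) :
    ((invW v).drop i).take k = invW ((v.drop (v.length - i - k)).take k) := by
  rw [invW, List.drop_reverse, List.take_reverse, List.length_map, List.length_take,
    List.length_map, List.drop_take, invW, List.map_take, List.map_drop]
  congr 4 <;> omega

lemma occ_invW (w v : Word n) : occ w (invW v) = occ (invW w) v := by
  rw [occ_eq_sum, occ_eq_sum, length_invW, length_invW, ← sum_range_reflect]
  refine sum_congr rfl fun i hi => ?_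
  rw [Finset.mem_range] at hi
  simp only [take_drop_invW v (show v.length + 1 - w.length - 1 - i + w.length ≤ v.length by omega),
    invW_eq_iff]
  congr 4
  omega

lemma cnt_invW (w v : Word n) : cnt w (invW v) = cnt (invW w) v := by
  rcases eq_or_ne w [] with rfl | hw
  · simp [cnt, invW]
  · have hw' : invW w ≠ [] := by simpa [invW] using hw
    simp [cnt, hw, hw', occ_invW]

lemma sum_occ_cons {α : Type*} [Fintype α] [DecidableEq α] (w v : List α) :
    ∑ s, occ (s :: w) v = ∑ i ∈ range (v.length - w.length),
      if (v.drop (i + 1)).take w.length = w then 1 else 0 := by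
  simp only [occ_eq_sum, List.length_cons, Nat.add_sub_add_right]
  rw [sum_comm]
  refine sum_congr rfl fun i hi => ?_
  rw [Finset.mem_range] at hi
  simp only [List.drop_eq_getElem_cons (show i < v.length by omega), List.take_succ_cons,
    List.cons.injEq, ite_and, sum_ite_eq, mem_univ, if_true]

lemma occ_eq_ite_add_sum_occ_cons {α : Type*} [Fintype α] [DecidableEq α] (w v : List α) :
    occ w v = (if w <+: v then 1 else 0) + ∑ s, occ (s :: w) v := by
  rw [sum_occ_cons]
  simp only [occ_eq_sum, List.prefix_iff_eq_take, eq_comm (a := w)]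
  rcases Nat.lt_or_ge v.length w.length with hlt | hle
  · have hne : v.take w.length ≠ w := fun h => by
      have := congrArg List.length h
      simp only [List.length_take] at this
      omega
    simp [show v.length + 1 - w.length = 0 by omega, show v.length - w.length = 0 by omega, hne]
  · rw [show v.length + 1 - w.length = v.length - w.length + 1 by omega, Finset.sum_range_succ',
      List.drop_zero, add_comm]

lemma occ_nil {α : Type*} [DecidableEq α] (v : List α) : occ [] v = v.length + 1 := by
  simp [occ_eq_sum]

lemma cnt_eq_occ_sub (w v : Word n) : cnt w v = occ w v - if w = [] then 1 else 0 := by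
  rcases eq_or_ne w [] with rfl | hw
  · simp [cnt, occ_nil]
  · simp [cnt, hw]

lemma occ_eq_zero_of_not_red {v w : Word n} (hv : Red v) (hw : ¬ Red w) : occ w v = 0 := by
  rw [occ_eq_sum]
  refine sum_eq_zero fun i _ => if_neg fun h => hw (red_of_infix hv ?_)
  rw [← h]
  exact ((List.take_prefix _ _).isInfix).trans (List.drop_suffix _ _).isInfix

lemma lgrp_eq_of_red {v : Word n} (hv : Red v) (w : Word n) :
    lgrp w v = (if w <+: v then 1 else 0) - if w = [] then 1 else 0 := by
  have hext : ∑ s ∈ univ.filter (fun s => Red (s :: w)), cnt (s :: w) v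
      = ∑ s, (occ (s :: w) v : ℚ) := by
    rw [sum_filter]
    refine sum_congr rfl fun s _ => ?_
    split_ifs with hs
    · simp [cnt]
    · simp [occ_eq_zero_of_not_red hv hs]
  have hocc := congrArg (Nat.cast : ℕ → ℚ) (occ_eq_ite_add_sum_occ_cons w v)
  push_cast at hocc
  rw [lgrp, hext, cnt_eq_occ_sub, hocc]
  ring

lemma invL_involutive : Function.Involutive (invL (n := n)) := invL_invL

lemma sum_red_cons_invW {M : Type*} [AddCommMonoid M] (g : Word n → M) (w : Word n) :
    ∑ s ∈ univ.filter (fun s => Red (s :: w)), g (invW (s :: w))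
      = ∑ t ∈ univ.filter (fun t => Red (invW w ++ [t])), g (invW w ++ [t]) :=
  sum_equiv invL_involutive.toPerm (by simp [red_cons_iff_red_invW_append])
    (by simp [invW_cons])

lemma rgrp_eq_lgrp_invW (w v : Word n) : rgrp w v = lgrp (invW w) (invW v) := by
  have hsum := sum_red_cons_invW (fun u => cnt u v) (invW w)
  simp only [invW_invW] at hsum
  simp only [rgrp, lgrp, cnt_invW, invW_invW, hsum]

lemma abs_lgrp_le {v : Word n} (hv : Red v) (w : Word n) : |lgrp w v| ≤ 1 := by
  rw [lgrp_eq_of_red hv]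
  split_ifs <;> norm_num

lemma abs_rgrp_le {v : Word n} (hv : Red v) (w : Word n) : |rgrp w v| ≤ 1 := by
  rw [rgrp_eq_lgrp_invW]
  exact abs_lgrp_le (red_invW hv) _

/-- The symmetry relation `s_w`. -/
def symRel (w : Word n) : Word n → ℚ := fun v => cnt w v + cnt (invW w) v

/-- The symmetrized extension relation `se_w`. -/
def symExtRel (w : Word n) : Word n → ℚ := fun v => lgrp w v - rgrp (invW w) v

def relations (n : ℕ) : Set (Word n → ℚ) :=
  {g | ∃ w, Red w ∧ g = symRel w} ∪ {g | ∃ w, Red w ∧ g = symExtRel w}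

lemma symRel_mem_span {w : Word n} (hw : Red w) : symRel w ∈ Submodule.span ℚ (relations n) :=
  Submodule.subset_span (Or.inl ⟨w, hw, rfl⟩)

lemma symExtRel_mem_span {w : Word n} (hw : Red w) :
    symExtRel w ∈ Submodule.span ℚ (relations n) :=
  Submodule.subset_span (Or.inr ⟨w, hw, rfl⟩)

lemma two_smul_lgrp (w : Word n) :
    (2 : ℚ) • lgrp w = symRel w - ∑ s ∈ univ.filter (fun s => Red (s :: w)), symRel (s :: w)
      + symExtRel w := by
  funext v
  have hsum := sum_red_cons_invW (fun u => cnt u v) w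
  simp only [Pi.add_apply, Pi.sub_apply, Pi.smul_apply, smul_eq_mul, Finset.sum_apply, symRel,
    symExtRel, sum_add_distrib, hsum, lgrp, rgrp]
  ring

lemma lgrp_mem_span {w : Word n} (hw : Red w) : lgrp w ∈ Submodule.span ℚ (relations n) := by
  refine (Submodule.smul_mem_iff _ (two_ne_zero (α := ℚ))).1 ?_
  rw [two_smul_lgrp]
  refine add_mem (sub_mem (symRel_mem_span hw) (sum_mem fun s hs => ?_)) (symExtRel_mem_span hw)
  exact symRel_mem_span (mem_filter.1 hs).2

lemma rgrp_mem_span {w : Word n} (hw : Red w) : rgrp w ∈ Submodule.span ℚ (relations n) := by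
  have h : rgrp w = lgrp (invW w) - symExtRel (invW w) := by
    funext v
    simp [symExtRel]
  rw [h]
  exact sub_mem (lgrp_mem_span (red_invW hw)) (symExtRel_mem_span (red_invW hw))

/-- Bounded functions on `F_n`, modelled on its reduced words. -/
def bounded (n : ℕ) : Submodule ℚ (Word n → ℚ) where
  carrier := {f | ∃ C : ℚ, ∀ v, Red v → |f v| ≤ C}
  add_mem' := by
    rintro f g ⟨C, hC⟩ ⟨D, hD⟩
    exact ⟨C + D, fun v hv => (abs_add_le _ _).trans (add_le_add (hC v hv) (hD v hv))⟩
  zero_mem' := ⟨0, fun v _ => by simp⟩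
  smul_mem' := by
    rintro c f ⟨C, hC⟩
    refine ⟨|c| * C, fun v hv => ?_⟩
    rw [Pi.smul_apply, smul_eq_mul, abs_mul]
    exact mul_le_mul_of_nonneg_left (hC v hv) (abs_nonneg c)

lemma lgrp_mem_bounded (w : Word n) : lgrp w ∈ bounded n :=
  ⟨1, fun _ hv => abs_lgrp_le hv w⟩

lemma rgrp_mem_bounded (w : Word n) : rgrp w ∈ bounded n :=
  ⟨1, fun _ hv => abs_rgrp_le hv w⟩

def countingSpan (n : ℕ) : Submodule ℚ (Word n → ℚ) :=
  Submodule.span ℚ {g | ∃ w, Red w ∧ g = cnt w}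

lemma cnt_mem_countingSpan {w : Word n} (hw : Red w) : cnt w ∈ countingSpan n :=
  Submodule.subset_span ⟨w, hw, rfl⟩

lemma lgrp_mem_countingSpan {w : Word n} (hw : Red w) : lgrp w ∈ countingSpan n := by
  have h : lgrp w = cnt w - ∑ s ∈ univ.filter (fun s => Red (s :: w)), cnt (s :: w) := by
    funext v
    simp [lgrp]
  rw [h]
  refine sub_mem (cnt_mem_countingSpan hw) (sum_mem fun s hs => ?_)
  exact cnt_mem_countingSpan (mem_filter.1 hs).2

lemma rgrp_mem_countingSpan {w : Word n} (hw : Red w) : rgrp w ∈ countingSpan n := by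
  have h : rgrp w = cnt w - ∑ s ∈ univ.filter (fun s => Red (w ++ [s])), cnt (w ++ [s]) := by
    funext v
    simp [rgrp]
  rw [h]
  refine sub_mem (cnt_mem_countingSpan hw) (sum_mem fun s hs => ?_)
  exact cnt_mem_countingSpan (mem_filter.1 hs).2

/-- The map `σ₁`, as a linear map. -/
def antisymm (n : ℕ) : (Word n → ℚ) →ₗ[ℚ] (Word n → ℚ) :=
  LinearMap.id - LinearMap.funLeft ℚ ℚ invW

def symmetrize (n : ℕ) : (Word n → ℚ) →ₗ[ℚ] (Word n → ℚ) :=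
  LinearMap.id + LinearMap.funLeft ℚ ℚ invW

lemma antisymm_apply (f : Word n → ℚ) : antisymm n f = sig1 f := rfl

lemma antisymm_symRel (w : Word n) : antisymm n (symRel w) = 0 := by
  funext v
  simp only [antisymm_apply, sig1, symRel, cnt_invW, invW_invW, Pi.zero_apply]
  ring

lemma antisymm_symExtRel (w : Word n) : antisymm n (symExtRel w) = (2 : ℚ) • symExtRel w := by
  funext v
  simp only [antisymm_apply, sig1, symExtRel, Pi.smul_apply, smul_eq_mul, rgrp_eq_lgrp_invW,
    invW_invW]
  ring

lemma span_relations_le_countingSpan :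
    Submodule.span ℚ (relations n) ≤ countingSpan n := by
  refine Submodule.span_le.2 ?_
  rintro g (⟨w, hw, rfl⟩ | ⟨w, hw, rfl⟩)
  · exact add_mem (cnt_mem_countingSpan hw) (cnt_mem_countingSpan (red_invW hw))
  · exact sub_mem (lgrp_mem_countingSpan hw) (rgrp_mem_countingSpan (red_invW hw))

lemma span_relations_le_comap_antisymm :
    Submodule.span ℚ (relations n) ≤ (bounded n).comap (antisymm n) := by
  refine Submodule.span_le.2 ?_
  rintro g (⟨w, hw, rfl⟩ | ⟨w, hw, rfl⟩)
  · simp [antisymm_symRel]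
  · simp only [SetLike.mem_coe, Submodule.mem_comap, antisymm_symExtRel]
    exact Submodule.smul_mem _ _
      (sub_mem (lgrp_mem_bounded w) (rgrp_mem_bounded (invW w)))

section WindowSum

variable {α : Type*}

/-- Windows have length `m + 1`, so that consecutive windows overlap in `m` letters. -/
def windowSum (D : List α → ℚ) (m : ℕ) (v : List α) : ℚ :=
  ∑ i ∈ range (v.length - m), D ((v.drop i).take (m + 1))

variable {D : List α → ℚ} {m : ℕ}

lemma windowSum_of_length {w : List α} (hw : w.length = m + 1) : windowSum D m w = D w := by
  simp [windowSum, hw, List.take_of_length_le hw.le]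

lemma length_rtake {x : List α} (hx : m ≤ x.length) : (x.rtake m).length = m := by
  simp only [List.rtake, List.length_drop]
  omega

lemma rtake_append {x y : List α} (hy : m ≤ y.length) : (x ++ y).rtake m = y.rtake m := by
  simp only [List.rtake, List.length_append]
  rw [show x.length + y.length - m = x.length + (y.length - m) by omega,
    List.drop_length_add_append]

lemma windowSum_append_left {x : List α} (hx : m ≤ x.length) (y : List α) :
    windowSum D m (x ++ y) = windowSum D m x + windowSum D m (x.rtake m ++ y) := by
  have hdrop : (x ++ y).drop (x.length - m) = x.rtake m ++ y :=
    List.drop_append_of_le_length (by omega)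
  simp only [windowSum, List.length_append, length_rtake hx]
  rw [show x.length + y.length - m = (x.length - m) + (m + y.length - m) by omega,
    sum_range_add]
  congr 1
  · refine sum_congr rfl fun i hi => ?_
    rw [Finset.mem_range] at hi
    rw [List.drop_append_of_le_length (by omega),
      List.take_append_of_le_length (by simp only [List.length_drop]; omega)]
  · refine sum_congr rfl fun j _ => ?_
    rw [← hdrop, List.drop_drop, add_comm]

lemma windowSum_append_right (x : List α) {y : List α} (hy : m ≤ y.length) :
    windowSum D m (x ++ y) = windowSum D m (x ++ y.take m) + windowSum D m y := by
  simp only [windowSum, List.length_append, List.length_take, min_eq_left hy]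
  rw [show x.length + y.length - m = x.length + (y.length - m) by omega,
    show x.length + m - m = x.length by omega, sum_range_add]
  congr 1
  · refine sum_congr rfl fun i hi => ?_
    rw [Finset.mem_range] at hi
    rw [List.take_drop, List.take_drop, List.take_append, List.take_append, List.take_take,
      min_eq_left (by omega)]
  · refine sum_congr rfl fun j _ => ?_
    rw [List.drop_length_add_append]

lemma windowSum_concat {x : List α} (hx : m ≤ x.length) (a : α) :
    windowSum D m (x ++ [a]) = windowSum D m x + D (x.rtake m ++ [a]) := by
  rw [windowSum_append_left hx,
    windowSum_of_length (w := x.rtake m ++ [a]) (by simp [length_rtake hx])]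

lemma windowSum_flatten_replicate {t : List α} (ht : m ≤ t.length) (k : ℕ) :
    windowSum D m (List.replicate (k + 1) t).flatten
      = windowSum D m t + k * windowSum D m (t.rtake m ++ t) := by
  induction k with
  | zero => simp
  | succ k ih =>
    have hsnoc : (List.replicate (k + 2) t).flatten = (List.replicate (k + 1) t).flatten ++ t := by
      rw [List.replicate_succ', List.flatten_append, List.flatten_singleton]
    have hlen : m ≤ (List.replicate (k + 1) t).flatten.length := by
      rw [List.replicate_succ, List.flatten_cons, List.length_append]
      omega
    have hrtake : (List.replicate (k + 1) t).flatten.rtake m = t.rtake m := by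
      rw [List.replicate_succ', List.flatten_append, List.flatten_singleton, rtake_append ht]
    rw [hsnoc, windowSum_append_left hlen, ih, hrtake]
    push_cast
    ring

end WindowSum

lemma eq_zero_of_forall_abs_natCast_mul_add_le {a b C : ℚ} (h : ∀ k : ℕ, |k * a + b| ≤ C) :
    a = 0 := by
  by_contra ha
  obtain ⟨k, hk⟩ := exists_nat_gt ((C + |b|) / |a|)
  have hlarge : C + |b| < k * |a| := (div_lt_iff₀ (abs_pos.2 ha)).1 hk
  have hlow : k * |a| - |b| ≤ |k * a + b| := by
    have := abs_sub_abs_le_abs_sub (k * a) (-b)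
    rw [abs_mul, Nat.abs_cast, abs_neg, sub_neg_eq_add] at this
    exact this
  linarith [h k]

variable {m : ℕ} {D : Word n → ℚ} {C : ℚ}

lemma red_flatten_replicate {t : Word n} (ht : Red (t ++ t)) (k : ℕ) :
    Red (List.replicate (k + 1) t).flatten := by
  rcases eq_or_ne t [] with rfl | ht0
  · simp [Red, redB]
  induction k with
  | zero => simpa using red_of_infix ht (List.prefix_append _ _).isInfix
  | succ k ih =>
    have h := red_append_overlap ht (by simpa [List.replicate_succ] using ih) ht0
    simpa [List.replicate_succ, List.append_assoc] using h

/-- Boundedness forces the cyclic window sum of a cyclically reduced word to vanish, since the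
window sum of its powers grows linearly with that slope. -/
lemma windowSum_rtake_append_eq_zero (hb : ∀ v, Red v → |windowSum D m v| ≤ C)
    {t : Word n} (ht : Red (t ++ t)) (hm : m ≤ t.length) :
    windowSum D m (t.rtake m ++ t) = 0 := by
  refine eq_zero_of_forall_abs_natCast_mul_add_le (b := windowSum D m t) (C := C) fun k => ?_
  rw [add_comm, ← windowSum_flatten_replicate hm]
  exact hb _ (red_flatten_replicate ht k)

/-- Closing `v` up into a cyclically reduced word `v ++ r` expresses `windowSum D m v` through
windows that only see the first and the last `m` letters of `v`. -/
lemma windowSum_eq_of_red_cycle (hb : ∀ v, Red v → |windowSum D m v| ≤ C)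
    {v r : Word n} (hvr : Red (v ++ r ++ (v ++ r))) (hv : m ≤ v.length) (hr : m ≤ r.length) :
    windowSum D m v
      = -(windowSum D m (r.rtake m ++ v.take m) + windowSum D m (v.rtake m ++ r)) := by
  have hcyc := windowSum_rtake_append_eq_zero hb hvr (by simp only [List.length_append]; omega)
  rw [rtake_append hr, ← List.append_assoc,
    windowSum_append_left (by simp only [List.length_append]; omega), rtake_append hv,
    windowSum_append_right _ hv] at hcyc
  linarith

lemma exists_bridge (hn : 2 ≤ n) (a b : Option (Fin n × Bool)) :
    ∃ c, (∀ x ∈ a, c ≠ invL x) ∧ ∀ y ∈ b, y ≠ invL c := by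
  let S : Finset (Fin n × Bool) := (a.map invL).toFinset ∪ (b.map invL).toFinset
  have hS : #S < #(univ : Finset (Fin n × Bool)) := by
    have ha : #(a.map invL).toFinset ≤ 1 := by cases a <;> simp
    have hb : #(b.map invL).toFinset ≤ 1 := by cases b <;> simp
    rw [card_univ, Fintype.card_prod, Fintype.card_fin, Fintype.card_bool]
    exact ((card_union_le _ _).trans (add_le_add ha hb)).trans_lt (by omega)
  obtain ⟨c, -, hc⟩ := exists_mem_notMem_of_card_lt_card hS
  refine ⟨c, fun x hx h => hc ?_, fun y hy h => hc ?_⟩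
  · simp [S, Option.mem_def.1 hx, h]
  · simp [S, Option.mem_def.1 hy, h]

noncomputable def bridge (hn : 2 ≤ n) (a b : Option (Fin n × Bool)) : Fin n × Bool :=
  (exists_bridge hn a b).choose

lemma red_append_bridge_cons (hn : 2 ≤ n) {x y : Word n} (hx : Red x) (hy : Red y) :
    Red (x ++ bridge hn x.getLast? y.head? :: y) := by
  obtain ⟨hleft, hright⟩ := (exists_bridge hn x.getLast? y.head?).choose_spec
  have hcy : Red ([bridge hn x.getLast? y.head?] ++ y) :=
    red_append_iff.2 ⟨rfl, hy, fun a ha b hb => by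
      simp only [List.getLast?_singleton, Option.mem_def, Option.some.injEq] at ha
      subst ha
      exact hright b hb⟩
  refine red_append_iff.2 ⟨hx, hcy, fun a ha b hb => ?_⟩
  simp only [List.head?_cons, Option.mem_def, Option.some.injEq] at hb
  exact hb ▸ hleft a ha

def baseWord (hn : 2 ≤ n) (m : ℕ) : Word n := List.replicate m (⟨0, by omega⟩, true)

lemma red_baseWord (hn : 2 ≤ n) (m : ℕ) : Red (baseWord hn m) :=
  red_iff_isChain.2 (List.isChain_replicate_of_rel m (by simp [invL]))

@[simp] lemma length_baseWord (hn : 2 ≤ n) (m : ℕ) : (baseWord hn m).length = m := by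
  simp [baseWord]

/-- Appended to a reduced word with first letters `p` and last letters `s`, this makes it
cyclically reduced; it sees the word only through `p` and `s`. -/
noncomputable def closingWord (hn : 2 ≤ n) (m : ℕ) (p s : Word n) : Word n :=
  bridge hn s.getLast? (baseWord hn m).head? ::
    (baseWord hn m ++ [bridge hn (baseWord hn m).getLast? p.head?])

lemma red_append_self_of_red_append_cons {v z : Word n} {c₁ c₂ : Fin n × Bool} (hv : v ≠ [])
    (hz : z ≠ []) (h₁ : Red (v ++ c₁ :: z)) (h₂ : Red (z ++ c₂ :: v)) :
    Red (v ++ c₁ :: (z ++ [c₂]) ++ (v ++ c₁ :: (z ++ [c₂]))) := by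
  have hvzv : Red (v ++ [c₁] ++ z ++ c₂ :: v) := red_append_overlap (by simpa using h₁) h₂ hz
  have hvz : Red (v ++ c₁ :: (z ++ [c₂])) :=
    red_of_infix hvzv (List.IsPrefix.isInfix ⟨v, by simp⟩)
  have h := red_append_overlap (x := v ++ c₁ :: (z ++ [c₂])) (by simpa using hvzv) hvz hv
  simpa using h

lemma red_append_closingWord (hn : 2 ≤ n) (hm : 0 < m) {v : Word n} (hv : Red v)
    (hlen : m ≤ v.length) :
    Red (v ++ closingWord hn m (v.take m) (v.rtake m)
      ++ (v ++ closingWord hn m (v.take m) (v.rtake m))) := by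
  have hv0 : v ≠ [] := List.ne_nil_of_length_pos (by omega)
  have hz0 : baseWord hn m ≠ [] := List.ne_nil_of_length_pos (by simp [hm])
  have hhead : (v.take m).head? = v.head? := by simp [List.head?_take, hm.ne']
  have hlast : (v.rtake m).getLast? = v.getLast? := by
    simp only [List.rtake, List.getLast?_drop, ite_eq_right_iff]
    omega
  rw [closingWord, hhead, hlast]
  exact red_append_self_of_red_append_cons hv0 hz0 (red_append_bridge_cons hn hv (red_baseWord hn m))
    (red_append_bridge_cons hn (red_baseWord hn m) hv)

lemma windowSum_eq_of_take_eq_of_rtake_eq (hn : 2 ≤ n) (hm : 0 < m)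
    (hb : ∀ v, Red v → |windowSum D m v| ≤ C) {v₁ v₂ : Word n} (h₁ : Red v₁) (h₂ : Red v₂)
    (hl₁ : m ≤ v₁.length) (hl₂ : m ≤ v₂.length) (htake : v₁.take m = v₂.take m)
    (hrtake : v₁.rtake m = v₂.rtake m) : windowSum D m v₁ = windowSum D m v₂ := by
  have hr : ∀ p s, m ≤ (closingWord hn m p s).length := fun p s => by
    simp only [closingWord, List.length_cons, List.length_append, length_baseWord,
      List.length_nil]
    omega
  rw [windowSum_eq_of_red_cycle hb (red_append_closingWord hn hm h₁ hl₁) hl₁ (hr _ _),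
    windowSum_eq_of_red_cycle hb (red_append_closingWord hn hm h₂ hl₂) hl₂ (hr _ _),
    htake, hrtake]

noncomputable def basePath (hn : 2 ≤ n) (m : ℕ) (u : Word n) : Word n :=
  baseWord hn m ++ bridge hn (baseWord hn m).getLast? u.head? :: u

lemma red_basePath (hn : 2 ≤ n) (m : ℕ) {u : Word n} (hu : Red u) : Red (basePath hn m u) :=
  red_append_bridge_cons hn (red_baseWord hn m) hu

lemma take_basePath (hn : 2 ≤ n) (m : ℕ) (u : Word n) :
    (basePath hn m u).take m = baseWord hn m := by
  simp [basePath]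

lemma rtake_basePath (hn : 2 ≤ n) {u : Word n} (hu : m ≤ u.length) :
    (basePath hn m u).rtake m = u.rtake m := by
  rw [basePath, ← List.singleton_append, ← List.append_assoc, rtake_append hu]

lemma length_basePath (hn : 2 ≤ n) (m : ℕ) (u : Word n) :
    (basePath hn m u).length = m + 1 + u.length := by
  simp only [basePath, List.length_append, length_baseWord, List.length_cons]
  omega

noncomputable def potential (hn : 2 ≤ n) (D : Word n → ℚ) (m : ℕ) (u : Word n) : ℚ :=
  windowSum D m (basePath hn m u)

lemma potential_tail_sub_potential (hn : 2 ≤ n) (hm : 0 < m)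
    (hb : ∀ v, Red v → |windowSum D m v| ≤ C) {u : Word n} {a : Fin n × Bool}
    (hua : Red (u ++ [a])) (hu : u.length = m) :
    potential hn D m (u ++ [a]).tail - potential hn D m u = D (u ++ [a]) := by
  have hu0 : u ≠ [] := List.ne_nil_of_length_pos (by omega)
  have hrtake_self : ∀ x : Word n, x.length = m → x.rtake m = x := fun x hx => by
    simp [List.rtake, hx]
  have hstep : windowSum D m (basePath hn m u ++ [a]) = potential hn D m u + D (u ++ [a]) := by
    rw [windowSum_concat (by rw [length_basePath]; omega), rtake_basePath hn hu.ge,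
      hrtake_self u hu, potential]
  have hpath : basePath hn m u ++ [a] = basePath hn m (u ++ [a]) := by
    simp [basePath, List.head?_append_of_ne_nil _ hu0]
  have htail : (u ++ [a]).tail.length = m := by simp [hu]
  have hsame : windowSum D m (basePath hn m (u ++ [a]))
      = potential hn D m (u ++ [a]).tail := by
    refine windowSum_eq_of_take_eq_of_rtake_eq hn hm hb (red_basePath hn m hua)
      (red_basePath hn m (red_of_infix hua (List.tail_suffix _).isInfix))
      (by rw [length_basePath]; omega) (by rw [length_basePath]; omega)
      (by rw [take_basePath, take_basePath]) ?_
    rw [rtake_basePath hn (by simp [hu]), rtake_basePath hn htail.ge, hrtake_self _ htail]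
    simp [List.rtake, hu]
  rw [← hsame, ← hpath, hstep]
  ring

def reducedWords (n m : ℕ) : Finset (Word n) :=
  ((univ : Finset (Fin m → Fin n × Bool)).image List.ofFn).filter Red

lemma mem_reducedWords {w : Word n} : w ∈ reducedWords n m ↔ Red w ∧ w.length = m := by
  simp only [reducedWords, Finset.mem_filter, Finset.mem_image, Finset.mem_univ, true_and]
  rw [and_comm]
  refine and_congr_right fun _ => ⟨?_, fun h => ⟨fun i => w[i], by subst h; simp⟩⟩
  rintro ⟨f, rfl⟩
  simp

lemma sum_reducedWords_succ_cons {M : Type*} [AddCommMonoid M] (g : Word n → M) (m : ℕ) :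
    ∑ w ∈ reducedWords n (m + 1), g w
      = ∑ u ∈ reducedWords n m, ∑ s ∈ univ.filter (fun s => Red (s :: u)), g (s :: u) := by
  rw [sum_sigma']
  symm
  refine sum_nbij (fun p => p.2 :: p.1) ?_ ?_ ?_ (fun _ _ => rfl)
  · rintro ⟨u, s⟩ hp
    simp only [Finset.mem_sigma, Finset.mem_filter, mem_univ, true_and, mem_reducedWords] at hp ⊢
    exact ⟨hp.2, by simp [hp.1.2]⟩
  · rintro ⟨u, s⟩ - ⟨u', s'⟩ - h
    simp only [List.cons.injEq] at h
    rw [h.1, h.2]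
  · rintro (_ | ⟨s, u⟩) hw
    · simp [mem_reducedWords] at hw
    · simp only [mem_coe, mem_reducedWords, List.length_cons, Nat.add_right_cancel_iff] at hw
      refine ⟨⟨u, s⟩, ?_, rfl⟩
      simp only [mem_coe, Finset.mem_sigma, Finset.mem_filter, mem_univ, true_and, mem_reducedWords]
      exact ⟨⟨red_of_infix hw.1 (List.suffix_cons _ _).isInfix, hw.2⟩, hw.1⟩

lemma invW_involutive : Function.Involutive (invW (n := n)) := invW_invW

lemma sum_reducedWords_invW {M : Type*} [AddCommMonoid M] (g : Word n → M) (m : ℕ) :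
    ∑ u ∈ reducedWords n m, g (invW u) = ∑ u ∈ reducedWords n m, g u :=
  sum_equiv invW_involutive.toPerm (by simp [mem_reducedWords, red_invW_iff]) (by simp)

lemma sum_reducedWords_succ_snoc {M : Type*} [AddCommMonoid M] (g : Word n → M) (m : ℕ) :
    ∑ w ∈ reducedWords n (m + 1), g w
      = ∑ u ∈ reducedWords n m, ∑ s ∈ univ.filter (fun s => Red (u ++ [s])), g (u ++ [s]) :=
  calc ∑ w ∈ reducedWords n (m + 1), g w
      = ∑ w ∈ reducedWords n (m + 1), g (invW w) := (sum_reducedWords_invW g _).symm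
    _ = ∑ u ∈ reducedWords n m, ∑ s ∈ univ.filter (fun s => Red (s :: u)), g (invW (s :: u)) :=
        sum_reducedWords_succ_cons _ m
    _ = ∑ u ∈ reducedWords n m,
          ∑ s ∈ univ.filter (fun s => Red (invW u ++ [s])), g (invW u ++ [s]) :=
        sum_congr rfl fun u _ => sum_red_cons_invW g u
    _ = _ := sum_reducedWords_invW
          (fun u => ∑ s ∈ univ.filter (fun s => Red (u ++ [s])), g (u ++ [s])) m

lemma sum_smul_rgrp_sub_lgrp (φ : Word n → ℚ) (m : ℕ) :
    ∑ u ∈ reducedWords n m, φ u • (rgrp u - lgrp u)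
      = ∑ w ∈ reducedWords n (m + 1), (φ w.tail - φ w.dropLast) • cnt w := by
  have hrl : ∀ u : Word n, rgrp u - lgrp u
      = ∑ s ∈ univ.filter (fun s => Red (s :: u)), cnt (s :: u)
        - ∑ s ∈ univ.filter (fun s => Red (u ++ [s])), cnt (u ++ [s]) := fun u => by
    funext v
    simp only [Pi.sub_apply, Finset.sum_apply, rgrp, lgrp]
    ring
  simp only [sub_smul, sum_sub_distrib, hrl, smul_sub, Finset.smul_sum]
  rw [sum_reducedWords_succ_cons (fun w => φ w.tail • cnt w),
    sum_reducedWords_succ_snoc (fun w => φ w.dropLast • cnt w)]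
  simp only [List.tail_cons, List.dropLast_concat]

def homogeneousSpan (n N : ℕ) : Submodule ℚ (Word n → ℚ) :=
  Submodule.span ℚ (cnt '' {u | Red u ∧ u.length = N})

lemma linearCombination_cnt_apply {l : Word n →₀ ℚ}
    (hl : l ∈ Finsupp.supported ℚ ℚ {u | Red u ∧ u.length = m + 1}) (v : Word n) :
    Finsupp.linearCombination ℚ cnt l v = windowSum l m v := by
  have hterm : ∀ w ∈ l.support, (l w • cnt w) v
      = ∑ i ∈ range (v.length - m), if (v.drop i).take (m + 1) = w then l w else 0 := by
    intro w hw
    have hlen : w.length = m + 1 := (hl hw).2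
    have hw0 : w ≠ [] := List.ne_nil_of_length_pos (by omega)
    simp only [Pi.smul_apply, smul_eq_mul, cnt, hw0, if_false, occ_eq_sum, hlen,
      Nat.add_sub_add_right, Nat.cast_sum, Finset.mul_sum]
    refine sum_congr rfl fun i _ => ?_
    split_ifs <;> simp
  rw [Finsupp.linearCombination_apply, Finsupp.sum, Finset.sum_apply, sum_congr rfl hterm,
    sum_comm, windowSum]
  refine sum_congr rfl fun i _ => ?_
  rw [Finset.sum_ite_eq]
  split_ifs with h
  · rfl
  · exact (Finsupp.notMem_support_iff.1 h).symm

lemma mem_span_relations_of_mem_homogeneousSpan (hn : 2 ≤ n) (hm : 0 < m) {h : Word n → ℚ}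
    (hh : h ∈ homogeneousSpan n (m + 1)) (hbd : h ∈ bounded n) :
    h ∈ Submodule.span ℚ (relations n) := by
  obtain ⟨l, hl, rfl⟩ := (Finsupp.mem_span_image_iff_linearCombination ℚ).1 hh
  obtain ⟨C, hC⟩ := hbd
  have hb : ∀ v, Red v → |windowSum l m v| ≤ C := fun v hv =>
    linearCombination_cnt_apply hl v ▸ hC v hv
  have hsum : Finsupp.linearCombination ℚ cnt l
      = ∑ w ∈ reducedWords n (m + 1), l w • cnt w := by
    rw [Finsupp.linearCombination_apply]
    exact Finsupp.sum_of_support_subset l (fun w hw => mem_reducedWords.2 (hl hw)) _ (by simp)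
  have hedge : ∀ w ∈ reducedWords n (m + 1),
      l w = potential hn l m w.tail - potential hn l m w.dropLast := by
    intro w hw
    obtain ⟨hred, hlen⟩ := mem_reducedWords.1 hw
    obtain rfl | ⟨u, a, rfl⟩ := List.eq_nil_or_concat' w
    · simp at hlen
    rw [List.dropLast_concat,
      potential_tail_sub_potential hn hm hb hred (by simpa using hlen)]
  rw [hsum, sum_congr rfl fun w hw => by rw [hedge w hw], ← sum_smul_rgrp_sub_lgrp]
  refine sum_mem fun u hu => Submodule.smul_mem _ _ (sub_mem ?_ ?_)
  · exact rgrp_mem_span (mem_reducedWords.1 hu).1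
  · exact lgrp_mem_span (mem_reducedWords.1 hu).1

def boundedRelations (n : ℕ) : Submodule ℚ (Word n → ℚ) :=
  Submodule.span ℚ (relations n) ⊓ bounded n

lemma cnt_mem_sup_homogeneousSpan {N : ℕ} {w : Word n} (hw : Red w) (hwN : w.length ≤ N) :
    cnt w ∈ boundedRelations n ⊔ homogeneousSpan n N := by
  induction hk : N - w.length generalizing w with
  | zero =>
    exact Submodule.mem_sup_right (Submodule.subset_span ⟨w, ⟨hw, by omega⟩, rfl⟩)
  | succ k ih =>
    have hcnt : cnt w = lgrp w + ∑ s ∈ univ.filter (fun s => Red (s :: w)), cnt (s :: w) := by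
      funext v
      simp [lgrp]
    rw [hcnt]
    refine add_mem (Submodule.mem_sup_left ⟨lgrp_mem_span hw, lgrp_mem_bounded w⟩)
      (sum_mem fun s hs => ih (Finset.mem_filter.1 hs).2 ?_ ?_) <;>
    simp only [List.length_cons] <;> omega

lemma monotone_sup_homogeneousSpan :
    Monotone fun N => boundedRelations n ⊔ homogeneousSpan n N := by
  refine monotone_nat_of_le_succ fun N => sup_le le_sup_left (Submodule.span_le.2 ?_)
  rintro _ ⟨u, ⟨hu, hlen⟩, rfl⟩
  exact cnt_mem_sup_homogeneousSpan hu (by omega)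

lemma countingSpan_le_iSup_sup_homogeneousSpan :
    countingSpan n ≤ ⨆ N, boundedRelations n ⊔ homogeneousSpan n N := by
  refine Submodule.span_le.2 ?_
  rintro _ ⟨w, hw, rfl⟩
  exact Submodule.mem_iSup_of_mem w.length (cnt_mem_sup_homogeneousSpan hw le_rfl)

lemma mem_span_relations_of_mem_countingSpan_of_mem_bounded (hn : 2 ≤ n) {g : Word n → ℚ}
    (hg : g ∈ countingSpan n) (hb : g ∈ bounded n) : g ∈ Submodule.span ℚ (relations n) := by
  obtain ⟨N, hN⟩ := (Submodule.mem_iSup_of_directed _ monotone_sup_homogeneousSpan.directed_le).1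
    (countingSpan_le_iSup_sup_homogeneousSpan hg)
  obtain ⟨a, ha, h, hh, rfl⟩ :=
    Submodule.mem_sup.1 (monotone_sup_homogeneousSpan (Nat.le_add_right N 2) hN)
  have hhb : h ∈ bounded n := by simpa using sub_mem hb ha.2
  exact add_mem ha.1 (mem_span_relations_of_mem_homogeneousSpan hn N.succ_pos hh hhb)

lemma countingSpan_le_comap_funLeft_invW :
    countingSpan n ≤ (countingSpan n).comap (LinearMap.funLeft ℚ ℚ invW) := by
  refine Submodule.span_le.2 ?_
  rintro _ ⟨w, hw, rfl⟩
  have h : LinearMap.funLeft ℚ ℚ invW (cnt w) = cnt (invW w) := funext (cnt_invW w)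
  simpa [h] using cnt_mem_countingSpan (red_invW hw)

lemma countingSpan_le_comap_symmetrize :
    countingSpan n ≤ (Submodule.span ℚ (relations n)).comap (symmetrize n) := by
  refine Submodule.span_le.2 ?_
  rintro _ ⟨w, hw, rfl⟩
  have h : symmetrize n (cnt w) = symRel w :=
    funext fun v => congrArg (cnt w v + ·) (cnt_invW w v)
  simpa [h] using symRel_mem_span hw

lemma mem_span_relations_of_antisymm_mem_bounded (hn : 2 ≤ n) {f : Word n → ℚ}
    (hf : f ∈ countingSpan n) (hb : antisymm n f ∈ bounded n) :
    f ∈ Submodule.span ℚ (relations n) := by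
  have hsym := countingSpan_le_comap_symmetrize hf
  have hanti : antisymm n f ∈ countingSpan n :=
    sub_mem hf (countingSpan_le_comap_funLeft_invW hf)
  have hdecomp : f = (2⁻¹ : ℚ) • symmetrize n f + (2⁻¹ : ℚ) • antisymm n f := by
    funext v
    simp only [symmetrize, LinearMap.add_apply, LinearMap.id_apply, antisymm_apply, sig1,
      LinearMap.funLeft_apply, Pi.add_apply, Pi.smul_apply, smul_eq_mul]
    ring
  rw [hdecomp]
  exact add_mem (Submodule.smul_mem _ _ hsym) (Submodule.smul_mem _ _
    (mem_span_relations_of_mem_countingSpan_of_mem_bounded hn hanti hb))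

end BrooksKernel

/-- The kernel K_Br of σ = σ₂ ∘ σ₁ (counting functions f with σ₁ f bounded on F_n)
is spanned by the symmetry relations s_w = p_w + p_{w⁻¹} and the symmetrized extension
relations se_w = l_w - r_{w⁻¹}, over all reduced words w. -/
theorem stmt_19 (n : ℕ) (hn : 2 ≤ n) (f : List (Fin n × Bool) → ℚ) :
    (f ∈ Submodule.span ℚ {g : List (Fin n × Bool) → ℚ | ∃ w, Red w ∧ g = cnt w} ∧
      ∃ C : ℚ, ∀ v : List (Fin n × Bool), Red v → |sig1 f v| ≤ C) ↔
    f ∈ Submodule.span ℚ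
      ({g : List (Fin n × Bool) → ℚ | ∃ w, Red w ∧
          g = fun v => cnt w v + cnt (invW w) v} ∪
       {g : List (Fin n × Bool) → ℚ | ∃ w, Red w ∧
          g = fun v => lgrp w v - rgrp (invW w) v}) := by
  change f ∈ BrooksKernel.countingSpan n ∧ BrooksKernel.antisymm n f ∈ BrooksKernel.bounded n ↔
    f ∈ Submodule.span ℚ (BrooksKernel.relations n)
  exact ⟨fun ⟨hf, hb⟩ => BrooksKernel.mem_span_relations_of_antisymm_mem_bounded hn hf hb,
    fun h => ⟨BrooksKernel.span_relations_le_countingSpan h,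
      BrooksKernel.span_relations_le_comap_antisymm h⟩⟩
end
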